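/- On an r × m grid labeled with labels from a set of size k such that each label class has size n/k (n = r·m divisible by k) arranged as a valid placement, the cut size of the k-Balanced Partition induced by the label classes equals the number of neighboring pairs of cells with different labels; in particular, any placement φ of a multiset consisting of k distinct single-character probes with prescribed multiplicities summing to n, together with the unique good deposition sequence, has border length (with single-character probes) equal to the cut size of the corresponding partition of the grid graph. -/

import Mathlib

/-- Two cells of an `r × m` array are neighbors iff their Manhattan distance is `1`. -/
abbrev adj {r m : ℕ} (u v : Fin r × Fin m) : Prop :=
  Nat.dist (u.1 : ℕ) (v.1 : ℕ) + Nat.dist (u.2 : ℕ) (v.2 : ℕ) = 1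

/-- The greedy leftmost embedding of a string `s` into a supersequence `D`. -/
def emb {α : Type*} [DecidableEq α] : List α → List α → List (Option α)
  | [], _ => []
  | _ :: D, [] => none :: emb D []
  | d :: D, c :: s => if d = c then some c :: emb D s else none :: emb D (c :: s)

/-- Hamming distance between two lists (of equal length). -/
def hammingL {β : Type*} [DecidableEq β] : List β → List β → ℕ
  | x :: xs, y :: ys => (if x = y then 0 else 1) + hammingL xs ys
  | _, _ => 0

/-
With a deposition sequence containing every character, the embedding of a single-character
probe `c` is blank except at the first occurrence of `c`. Two such embeddings therefore agree
when the characters agree and differ in exactly the two marked positions otherwise, so each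
neighboring pair of cells contributes `2` to the border length if its labels differ and `0`
if not.
-/

section Hamming

variable {β : Type*} [DecidableEq β]

lemma hammingL_self (l : List β) : hammingL l l = 0 := by
  induction l with
  | nil => rfl
  | cons x xs ih => simp [hammingL, ih]

lemma hammingL_comm (l l' : List β) : hammingL l l' = hammingL l' l := by
  induction l generalizing l' with
  | nil => cases l' <;> rfl
  | cons x xs ih =>
    cases l' with
    | nil => rfl
    | cons y ys => simp [hammingL, ih, eq_comm]

end Hamming

section Embedding

variable {α : Type*} [DecidableEq α]

lemma hammingL_emb_nil_emb_singleton {D : List α} {b : α} (hb : b ∈ D) :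
    hammingL (emb D []) (emb D [b]) = 1 := by
  induction D with
  | nil => cases hb
  | cons d D ih =>
    by_cases hdb : d = b
    · simp [emb, hdb, hammingL, hammingL_self]
    · simp [emb, hdb, hammingL, ih (List.mem_of_ne_of_mem (Ne.symm hdb) hb)]

lemma hammingL_emb_singleton_of_ne {D : List α} {a b : α} (ha : a ∈ D) (hb : b ∈ D)
    (hab : a ≠ b) : hammingL (emb D [a]) (emb D [b]) = 2 := by
  induction D with
  | nil => cases ha
  | cons d D ih =>
    by_cases hda : d = a
    · subst hda
      simp [emb, hab, hammingL,
        hammingL_emb_nil_emb_singleton (List.mem_of_ne_of_mem hab.symm hb)]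
    have ha' := List.mem_of_ne_of_mem (Ne.symm hda) ha
    by_cases hdb : d = b
    · subst hdb
      simp [emb, hda, hammingL, hammingL_comm (emb D [a]),
        hammingL_emb_nil_emb_singleton ha']
    · simp [emb, hda, hdb, hammingL, ih ha' (List.mem_of_ne_of_mem (Ne.symm hdb) hb)]

lemma hammingL_emb_singleton {D : List α} {a b : α} (ha : a ∈ D) (hb : b ∈ D) :
    hammingL (emb D [a]) (emb D [b]) = if a = b then 0 else 2 := by
  split_ifs with hab
  · rw [hab, hammingL_self]
  · exact hammingL_emb_singleton_of_ne ha hb hab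

end Embedding

/-- For a placement `φ` of single-character probes over the alphabet `Fin k` on
an `r × m` grid, with deposition sequence `D = c_1 c_2 ... c_k`, the border
length (sum over ordered neighboring pairs of Hamming distances of embeddings)
equals `2` times the number of ordered neighboring pairs with different labels,
i.e. twice the cut size of the induced partition of the grid graph (both sides
count each unordered pair twice). -/
theorem stmt_15 (r m k : ℕ) (φ : Fin r × Fin m → Fin k) :
    ∑ p ∈ Finset.univ.filter
        (fun p : (Fin r × Fin m) × (Fin r × Fin m) => adj p.1 p.2),
        hammingL (emb (List.finRange k) [φ p.1]) (emb (List.finRange k) [φ p.2]) =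
    2 * (Finset.univ.filter
        (fun p : (Fin r × Fin m) × (Fin r × Fin m) =>
          adj p.1 p.2 ∧ φ p.1 ≠ φ p.2)).card := by
  simp_rw [hammingL_emb_singleton (List.mem_finRange _) (List.mem_finRange _)]
  rw [← Finset.sum_filter_not_add_sum_filter _ (fun p => φ p.1 = φ p.2)]
  simp [Finset.filter_filter, Finset.sum_ite, mul_comm]
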